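/- The factor polynomial satisfies e_{n-1}^*(1) = (-1)^{n+1} n for every positive integer n, where e_n(t) = (1-t) e_{n-1}^*(t). -/

import Mathlib

open Polynomial MeasureTheory

/-- Falling factorial `c(c-1)⋯(c-m+1)` for real `c`. -/
noncomputable def fallFac (c : ℝ) (m : ℕ) : ℝ := ∏ i ∈ Finset.range m, (c - i)

/-- The identity-type polynomial `e_n(t) = ∑_{m=0}^n ((n)_m (-n)_m / (m!)^2) t^m`. -/
noncomputable def idPoly (n : ℕ) : Polynomial ℝ :=
  ∑ m ∈ Finset.range (n + 1),
    Polynomial.C (fallFac (n : ℝ) m * fallFac (-(n : ℝ)) m / ((Nat.factorial m : ℝ)) ^ 2) *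
      Polynomial.X ^ m

/-! `q(1) = -e_n'(1)`, and `m` times the `m`-th coefficient of `e_n` is
`(-1)^m n C(n,m) C(n-1+m,n)`. The alternating sum `∑ (-1)^(n-m) C(n,m) C(n-1+m,n)` is the `n`-th
forward difference of `x ↦ C(x,n)`, which is identically `1`; hence `e_n'(1) = (-1)^n n`. -/

open Finset Nat

theorem Nat.mul_ascFactorial (n m : ℕ) :
    m * n.ascFactorial m = n * m ! * (n - 1 + m).choose n := by
  rcases n with _ | N
  · rcases m with _ | m <;> simp [Nat.zero_ascFactorial]
  · rw [Nat.ascFactorial_eq_factorial_mul_choose, add_tsub_cancel_right, ← Nat.choose_symm_add]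
    have := Nat.choose_succ_right_eq (N + m) N
    rw [add_tsub_cancel_left] at this
    rw [mul_left_comm, mul_comm m, ← this]
    ring

theorem Polynomial.eval_one_eq_neg_derivative_eval_one {R : Type*} [CommRing R] {p q : R[X]}
    (h : p = (1 - X) * q) : q.eval 1 = -(derivative p).eval 1 := by
  simp [h, derivative_mul]

lemma fallFac_eq_descPochhammer_eval (c : ℝ) (m : ℕ) :
    fallFac c m = (descPochhammer ℝ m).eval c :=
  (descPochhammer_eval_eq_prod_range m c).symm

lemma fallFac_natCast (n m : ℕ) : fallFac n m = n.descFactorial m := by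
  rw [fallFac_eq_descPochhammer_eval, descPochhammer_eval_eq_descFactorial]

lemma fallFac_neg_natCast (n m : ℕ) : fallFac (-n) m = (-1) ^ m * n.ascFactorial m := by
  have h := ascPochhammer_eval_neg_eq_descPochhammer ℝ (-(n : ℝ)) m
  rw [neg_neg, ascPochhammer_nat_eq_natCast_ascFactorial] at h
  rw [fallFac_eq_descPochhammer_eval, h, ← mul_assoc, ← mul_pow]
  norm_num

lemma derivative_idPoly_eval_one (n : ℕ) :
    (derivative (idPoly n)).eval 1 = ∑ m ∈ range (n + 1),
      fallFac n m * fallFac (-n) m / (m ! : ℝ) ^ 2 * m := by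
  simp [idPoly, derivative_X_pow, eval_finsetSum]

lemma fallFac_mul_fallFac_neg_div_sq_mul (n m : ℕ) :
    fallFac n m * fallFac (-n) m / (m ! : ℝ) ^ 2 * m
      = n * ((-1) ^ m * (n.choose m * (n - 1 + m).choose n : ℕ)) := by
  have hasc : (m : ℝ) * n.ascFactorial m = n * m ! * (n - 1 + m).choose n := by
    exact_mod_cast Nat.mul_ascFactorial n m
  rw [fallFac_natCast, fallFac_neg_natCast, Nat.descFactorial_eq_factorial_mul_choose]
  push_cast
  field_simp
  linear_combination (n.choose m : ℝ) * hasc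

theorem sum_range_neg_one_pow_mul_choose_mul_choose (n : ℕ) :
    ∑ m ∈ range (n + 1), (-1 : ℤ) ^ m * (n.choose m * (n - 1 + m).choose n : ℕ) = (-1) ^ n := by
  -- the sum is `(-1) ^ n` times the `n`-th forward difference of `x ↦ x.choose n` at `n - 1`
  have h := congrFun (fwdDiff_iter_choose 0 n) (n - 1)
  rw [fwdDiff_iter_eq_sum_shift, Nat.choose_zero_right, Nat.cast_one] at h
  have h' := congrArg ((-1 : ℤ) ^ n * ·) h
  simp only [mul_one, mul_sum] at h'
  rw [← h']
  refine sum_congr rfl fun m hm => ?_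
  have hpow : (-1 : ℤ) ^ m * (-1) ^ (n - m) = (-1) ^ n := by
    rw [← pow_add, Nat.add_sub_cancel' (Nat.lt_succ_iff.mp (mem_range.mp hm))]
  have hsq : ((-1 : ℤ) ^ (n - m)) ^ 2 = 1 := by
    rw [← pow_mul, mul_comm, pow_mul, neg_one_sq, one_pow]
  rw [← hpow, smul_eq_mul, smul_eq_mul, mul_one, add_zero]
  push_cast
  linear_combination (-(-1 : ℤ) ^ m * n.choose m * (n - 1 + m).choose n) * hsq

theorem factorPoly_eval_one_general (n : ℕ) (q : Polynomial ℝ)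
    (hq : idPoly n = (1 - Polynomial.X) * q) :
    q.eval 1 = (-1 : ℝ) ^ (n + 1) * n := by
  have hsum : ∑ m ∈ range (n + 1), (-1 : ℝ) ^ m * (n.choose m * (n - 1 + m).choose n : ℕ)
      = (-1) ^ n := by
    exact_mod_cast sum_range_neg_one_pow_mul_choose_mul_choose n
  rw [eval_one_eq_neg_derivative_eval_one hq, derivative_idPoly_eval_one]
  simp_rw [fallFac_mul_fallFac_neg_div_sq_mul]
  rw [← mul_sum, hsum, pow_succ]
  ring

theorem factorPoly_eval_one (n : ℕ) (hn : 0 < n) (q : Polynomial ℝ)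
    (hq : idPoly n = (1 - Polynomial.X) * q) :
    q.eval 1 = (-1 : ℝ) ^ (n + 1) * n :=
  factorPoly_eval_one_general n q hq
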